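/- (Lemma 2.1(ii).) Let ι be a nonempty finite index set, n : ι → ℝ³ a family of unit vectors each with strictly positive third coordinate, and w : ι → ℝ a family of strictly positive weights. Then the range of the linear map L : ℝ² → ℝ³ defined by L b = Σ_{i ∈ ι} w(i) • V(n(i)) b is a two-dimensional subspace of ℝ³, i.e., its rank equals 2. -/

import Mathlib

/-- The discrete velocity field matrix of equation (2.6). -/
noncomputable def Vmap (n : EuclideanSpace ℝ (Fin 3)) (b : EuclideanSpace ℝ (Fin 2)) :
    EuclideanSpace ℝ (Fin 3) :=
  WithLp.toLp 2 ![b 0 - n 0 * (n 0 * b 0 + n 1 * b 1) / (1 + n 2),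
    b 1 - n 1 * (n 0 * b 0 + n 1 * b 1) / (1 + n 2),
    n 0 * b 0 + n 1 * b 1]

/-!
The horizontal part of `Vmap n b` pairs with `b` to `‖b‖² - s² / (1 + n₃)`, and Cauchy–Schwarz
`s² ≤ (1 - n₃²) ‖b‖²` bounds this below by `n₃ ‖b‖²`. Summing with positive weights, the
horizontal part of `L b` pairs with `b` to at least `(∑ wᵢ nᵢ₃) ‖b‖²`, a positive multiple of
`‖b‖²`; so `L` is injective and its range has the dimension of `ℝ²`.
-/

lemma EuclideanSpace.sq_add_sq_add_sq_of_norm_eq_one {n : EuclideanSpace ℝ (Fin 3)}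
    (hn : ‖n‖ = 1) : n 0 ^ 2 + n 1 ^ 2 + n 2 ^ 2 = 1 := by
  have h := EuclideanSpace.real_norm_sq_eq n
  rw [hn, Fin.sum_univ_three] at h
  linarith

lemma EuclideanSpace.norm_sq_eq_fin_two (b : EuclideanSpace ℝ (Fin 2)) :
    ‖b‖ ^ 2 = b 0 ^ 2 + b 1 ^ 2 := by
  rw [EuclideanSpace.real_norm_sq_eq, Fin.sum_univ_two]

lemma Vmap_horizontal_pairing {n : EuclideanSpace ℝ (Fin 3)} (hn3 : 1 + n 2 ≠ 0)
    (b : EuclideanSpace ℝ (Fin 2)) :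
    Vmap n b 0 * b 0 + Vmap n b 1 * b 1
      = ‖b‖ ^ 2 - (n 0 * b 0 + n 1 * b 1) ^ 2 / (1 + n 2) := by
  simp only [Vmap, PiLp.toLp_apply, Matrix.cons_val_zero, Matrix.cons_val_one,
    EuclideanSpace.norm_sq_eq_fin_two]
  field_simp
  ring

lemma mul_norm_sq_le_Vmap_horizontal_pairing {n : EuclideanSpace ℝ (Fin 3)} (hn : ‖n‖ = 1)
    (hn3 : -1 < n 2) (b : EuclideanSpace ℝ (Fin 2)) :
    n 2 * ‖b‖ ^ 2 ≤ Vmap n b 0 * b 0 + Vmap n b 1 * b 1 := by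
  have hunit := EuclideanSpace.sq_add_sq_add_sq_of_norm_eq_one hn
  have hpos : 0 < 1 + n 2 := by linarith
  have cauchy_schwarz : (n 0 * b 0 + n 1 * b 1) ^ 2 ≤ (1 - n 2 ^ 2) * ‖b‖ ^ 2 := by
    rw [EuclideanSpace.norm_sq_eq_fin_two]
    nlinarith [sq_nonneg (n 0 * b 1 - n 1 * b 0)]
  have hdiv : (n 0 * b 0 + n 1 * b 1) ^ 2 / (1 + n 2) ≤ (1 - n 2) * ‖b‖ ^ 2 := by
    rw [div_le_iff₀ hpos]
    nlinarith
  rw [Vmap_horizontal_pairing hpos.ne']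
  linarith

lemma mul_norm_sq_le_sum_Vmap_horizontal_pairing {ι : Type*} [Fintype ι]
    {n : ι → EuclideanSpace ℝ (Fin 3)} (hn : ∀ i, ‖n i‖ = 1) (hn3 : ∀ i, -1 < n i 2)
    {w : ι → ℝ} (hw : ∀ i, 0 ≤ w i) (b : EuclideanSpace ℝ (Fin 2)) :
    (∑ i, w i * n i 2) * ‖b‖ ^ 2
      ≤ (∑ i, w i • Vmap (n i) b) 0 * b 0 + (∑ i, w i • Vmap (n i) b) 1 * b 1 := by
  simp only [WithLp.ofLp_sum, WithLp.ofLp_smul, Finset.sum_apply, Pi.smul_apply, smul_eq_mul,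
    Finset.sum_mul, ← Finset.sum_add_distrib]
  refine Finset.sum_le_sum fun i _ => ?_
  have := mul_le_mul_of_nonneg_left (mul_norm_sq_le_Vmap_horizontal_pairing (hn i) (hn3 i) b) (hw i)
  linarith

/-- Lemma 2.1(ii): the range of the averaging operator composed with the
global velocity field is a two-dimensional subspace of `ℝ³`. -/
theorem stmt4 {ι : Type*} [Fintype ι] [Nonempty ι]
    (n : ι → EuclideanSpace ℝ (Fin 3)) (hn : ∀ i, ‖n i‖ = 1) (hn3 : ∀ i, 0 < n i 2)
    (w : ι → ℝ) (hw : ∀ i, 0 < w i)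
    (L : EuclideanSpace ℝ (Fin 2) →ₗ[ℝ] EuclideanSpace ℝ (Fin 3))
    (hL : ∀ b, L b = ∑ i, w i • Vmap (n i) b) :
    Module.finrank ℝ (LinearMap.range L) = 2 := by
  have hc : 0 < ∑ i, w i * n i 2 :=
    Finset.sum_pos (fun i _ => mul_pos (hw i) (hn3 i)) Finset.univ_nonempty
  have hinj : Function.Injective L := by
    refine (injective_iff_map_eq_zero L).2 fun b hb => norm_eq_zero.1 ?_
    have h := mul_norm_sq_le_sum_Vmap_horizontal_pairing hn (fun i => by linarith [hn3 i])
      (fun i => (hw i).le) b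
    rw [← hL, hb] at h
    simp only [PiLp.zero_apply, zero_mul, add_zero] at h
    exact pow_eq_zero_iff two_ne_zero |>.1 <|
      le_antisymm (nonpos_of_mul_nonpos_right h hc) (sq_nonneg _)
  rw [LinearMap.finrank_range_of_inj hinj, finrank_euclideanSpace_fin]
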